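/- arXiv:2310.16111 — 4 statements merged into one kernel-verified Lean document; each statement's English description precedes it below -/
import Mathlib

section
/- Sampling one token from the temperature-T softmax distribution of clipped logits satisfies ε-local differential privacy with ε = 2(b₂ - b₁)/T: for any two inputs D, D' with logit vectors u(D), u(D') ∈ [b₁, b₂]^V and any token v, Pr[output = v on D] ≤ exp(2(b₂-b₁)/T) · Pr[output = v on D']. -/
theorem softmax_sampling_ldp {𝒟 : Type*} (V : ℕ) (logits : 𝒟 → Fin V → ℝ)
    (b₁ b₂ T : ℝ) (hT : 0 < T)
    (hbound : ∀ D i, logits D i ∈ Set.Icc b₁ b₂)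
    (D D' : 𝒟) (v : Fin V) :
    Real.exp (logits D v / T) / ∑ j, Real.exp (logits D j / T) ≤
      Real.exp (2 * (b₂ - b₁) / T) *
        (Real.exp (logits D' v / T) / ∑ j, Real.exp (logits D' j / T)) := by
  have hne : Nonempty (Fin V) := ⟨v⟩
  set c := (b₂ - b₁) / T with hc
  have hkey : ∀ (A B : 𝒟) (i : Fin V),
      Real.exp (logits A i / T) ≤ Real.exp c * Real.exp (logits B i / T) := by
    intro A B i
    rw [← Real.exp_add]
    apply Real.exp_le_exp.mpr
    rw [hc]
    have h1 := (hbound A i).2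
    have h2 := (hbound B i).1
    rw [← add_div, div_le_div_iff_of_pos_right hT]
    linarith
  have hSpos : (0:ℝ) < ∑ j, Real.exp (logits D j / T) :=
    Finset.sum_pos (fun j _ => Real.exp_pos _) Finset.univ_nonempty
  have hS'pos : (0:ℝ) < ∑ j, Real.exp (logits D' j / T) :=
    Finset.sum_pos (fun j _ => Real.exp_pos _) Finset.univ_nonempty
  have hS : (∑ j, Real.exp (logits D' j / T)) ≤ Real.exp c * ∑ j, Real.exp (logits D j / T) := by
    rw [Finset.mul_sum]
    exact Finset.sum_le_sum fun j _ => hkey D' D j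
  have h2c : Real.exp (2 * (b₂ - b₁) / T) = Real.exp c * Real.exp c := by
    rw [← Real.exp_add, hc]; ring_nf
  rw [h2c, mul_assoc, ← mul_div_assoc, ← mul_div_assoc, div_le_div_iff₀ hSpos hS'pos]
  calc Real.exp (logits D v / T) * ∑ j, Real.exp (logits D' j / T)
      ≤ (Real.exp c * Real.exp (logits D' v / T)) *
        (Real.exp c * ∑ j, Real.exp (logits D j / T)) := by
        apply mul_le_mul (hkey D D' v) hS hS'pos.le
        positivity
    _ = Real.exp c * (Real.exp c * Real.exp (logits D' v / T)) *
        ∑ j, Real.exp (logits D j / T) := by ring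
end

section
/- The exponential mechanism with utility function u and privacy parameter ε, which outputs v with probability proportional to exp(ε·u(D,v)/(2Δu)), satisfies ε-differential privacy, where Δu = max over neighboring D, D' and all v of |u(D,v) - u(D',v)|. -/
open Real Finset

/- Scaling by `ε / (2 * Δu)` turns a utility of sensitivity `Δu` into exponents that move by at
most `ε / 2` between neighbouring datasets. Such a shift changes the weight `exp` of the output by
a factor of at most `exp (ε / 2)`, and the normalising sum by the same factor, whence `exp ε`. -/

theorem exp_le_exp_mul_exp_of_sub_le {x y δ : ℝ} (h : x - y ≤ δ) :
    exp x ≤ exp δ * exp y := by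
  rw [← exp_add, exp_le_exp]
  linarith

theorem exp_div_sum_exp_le_exp_mul {ι : Type*} [Fintype ι] {f g : ι → ℝ} {δ : ℝ}
    (h : ∀ j, |f j - g j| ≤ δ) (i : ι) :
    exp (f i) / ∑ j, exp (f j) ≤ exp (2 * δ) * (exp (g i) / ∑ j, exp (g j)) := by
  have hf : 0 < ∑ j, exp (f j) := sum_pos (fun j _ ↦ exp_pos _) ⟨i, mem_univ i⟩
  have hg : 0 < ∑ j, exp (g j) := sum_pos (fun j _ ↦ exp_pos _) ⟨i, mem_univ i⟩
  have hnum : exp (f i) ≤ exp δ * exp (g i) :=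
    exp_le_exp_mul_exp_of_sub_le (abs_le.mp (h i)).2
  have hden : ∑ j, exp (g j) ≤ exp δ * ∑ j, exp (f j) := by
    rw [mul_sum]
    exact sum_le_sum fun j _ ↦
      exp_le_exp_mul_exp_of_sub_le (by linarith [(abs_le.mp (h j)).1])
  rw [mul_div_assoc', div_le_div_iff₀ hf hg]
  calc exp (f i) * ∑ j, exp (g j)
      ≤ (exp δ * exp (g i)) * (exp δ * ∑ j, exp (f j)) :=
        mul_le_mul hnum hden hg.le (by positivity)
    _ = exp (2 * δ) * exp (g i) * ∑ j, exp (f j) := by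
        rw [two_mul, exp_add]; ring

theorem exponential_mechanism_dp {𝒟 𝒱 : Type*} [Fintype 𝒱]
    (adj : 𝒟 → 𝒟 → Prop) (u : 𝒟 → 𝒱 → ℝ) (ε Δu : ℝ)
    (hΔpos : 0 < Δu) (hε : 0 ≤ ε)
    (hsens : ∀ D D', adj D D' → ∀ v, |u D v - u D' v| ≤ Δu)
    (D D' : 𝒟) (hadj : adj D D') (v : 𝒱) :
    Real.exp (ε * u D v / (2 * Δu)) / ∑ w, Real.exp (ε * u D w / (2 * Δu)) ≤
      Real.exp ε *
        (Real.exp (ε * u D' v / (2 * Δu)) / ∑ w, Real.exp (ε * u D' w / (2 * Δu))) := by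
  have hscaled : ∀ w, |ε * u D w / (2 * Δu) - ε * u D' w / (2 * Δu)| ≤ ε / 2 := by
    intro w
    have hc : 0 ≤ ε / (2 * Δu) := by positivity
    calc |ε * u D w / (2 * Δu) - ε * u D' w / (2 * Δu)|
        = ε / (2 * Δu) * |u D w - u D' w| := by
          rw [← abs_of_nonneg hc, ← abs_mul]; congr 1; ring
      _ ≤ ε / (2 * Δu) * Δu := mul_le_mul_of_nonneg_left (hsens D D' hadj w) hc
      _ = ε / 2 := by field_simp
  simpa [mul_div_cancel₀] using exp_div_sum_exp_le_exp_mul hscaled v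
end

section
/- Restricting softmax sampling to a top-k subset breaks the differential privacy guarantee: there exist logit vectors u, u' ∈ [b₁, b₂]^V (V ≥ k+1) such that some token v has positive probability under top-k temperature sampling from u but zero probability under top-k temperature sampling from u'; hence no finite ε makes the top-k mechanism ε-PureLDP. -/
/-!
Put the maximal logit `b₂` on one token `v` and `b₁` everywhere else: since the top set is
nonempty, it must contain `v`, so `v` has positive probability. Swapping the roles of `b₁` and
`b₂` makes `v` the unique minimum; since the top set misses some token, it misses `v`, so `v`
has probability zero. No factor `exp ε` can bound a positive number by zero.
-/

open Finset Function

section TopSet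

variable {ι β : Type*} [LinearOrder β]

def IsTopSet (u : ι → β) (s : Finset ι) : Prop :=
  ∀ i ∈ s, ∀ j ∉ s, u j ≤ u i

variable {s : Finset ι} {u : ι → β} {v : ι}

theorem IsTopSet.mem_of_forall_lt (htop : IsTopSet u s) (hs : s.Nonempty)
    (hv : ∀ i ≠ v, u i < u v) : v ∈ s := by
  by_contra hvs
  obtain ⟨i, hi⟩ := hs
  have hiv : i ≠ v := by rintro rfl; exact hvs hi
  exact (htop i hi v hvs).not_gt (hv i hiv)

theorem IsTopSet.notMem_of_forall_gt [Fintype ι] (htop : IsTopSet u s) (hs : s ≠ univ)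
    (hv : ∀ j ≠ v, u v < u j) : v ∉ s := by
  intro hvs
  obtain ⟨j, hj⟩ : ∃ j, j ∉ s := by
    by_contra! h
    exact hs (eq_univ_of_forall h)
  have hjv : j ≠ v := by rintro rfl; exact hj hvs
  exact (htop v hvs j hj).not_gt (hv j hjv)

end TopSet

theorem forall_update_const_mem {ι α : Type*} [DecidableEq ι] {S : Set α} (v : ι) {x y : α}
    (hx : x ∈ S) (hy : y ∈ S) : ∀ i, update (fun _ => x) v y i ∈ S :=
  (forall_update_iff _ fun _ z => z ∈ S).2 ⟨hy, fun _ _ => hx⟩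

theorem top_k_sampling_breaks_dp_general (V k : ℕ) (hk : 1 ≤ k) (hkV : k + 1 ≤ V)
    (b₁ b₂ T : ℝ) (hb : b₁ < b₂)
    (topk : (Fin V → ℝ) → Finset (Fin V))
    (hcard : ∀ u, (topk u).card = k)
    (htop : ∀ u, ∀ i ∈ topk u, ∀ j ∉ topk u, u j ≤ u i)
    (P : (Fin V → ℝ) → Fin V → ℝ)
    (hP : ∀ u v, P u v =
      if v ∈ topk u then Real.exp (u v / T) / ∑ j ∈ topk u, Real.exp (u j / T)
      else 0) :
    (∃ u u' : Fin V → ℝ,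
      (∀ i, u i ∈ Set.Icc b₁ b₂) ∧ (∀ i, u' i ∈ Set.Icc b₁ b₂) ∧
      ∃ v : Fin V, 0 < P u v ∧ P u' v = 0) ∧
    ∀ ε : ℝ, ¬ (∀ u u' : Fin V → ℝ,
      (∀ i, u i ∈ Set.Icc b₁ b₂) → (∀ i, u' i ∈ Set.Icc b₁ b₂) →
      ∀ v : Fin V, P u v ≤ Real.exp ε * P u' v) := by
  let v : Fin V := ⟨0, by omega⟩
  let u : Fin V → ℝ := update (fun _ => b₁) v b₂
  let u' : Fin V → ℝ := update (fun _ => b₂) v b₁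
  have hb₁ : b₁ ∈ Set.Icc b₁ b₂ := ⟨le_rfl, hb.le⟩
  have hb₂ : b₂ ∈ Set.Icc b₁ b₂ := ⟨hb.le, le_rfl⟩
  have hu := forall_update_const_mem v hb₁ hb₂
  have hu' := forall_update_const_mem v hb₂ hb₁
  have hv_mem : v ∈ topk u :=
    IsTopSet.mem_of_forall_lt (htop u) (card_pos.mp (by rw [hcard]; omega))
      fun i hi => by simpa [u, update_of_ne hi] using hb
  have hv_notMem : v ∉ topk u' :=
    IsTopSet.notMem_of_forall_gt (htop u') ((card_lt_iff_ne_univ _).mp (by simp [hcard]; omega))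
      fun j hj => by simpa [u', update_of_ne hj] using hb
  have hpos : 0 < P u v := by
    rw [hP, if_pos hv_mem]
    exact div_pos (Real.exp_pos _) (sum_pos (fun j _ => Real.exp_pos _) ⟨v, hv_mem⟩)
  have hzero : P u' v = 0 := by rw [hP, if_neg hv_notMem]
  refine ⟨⟨u, u', hu, hu', v, hpos, hzero⟩, fun ε hdp => ?_⟩
  have := hdp u u' hu hu' v
  rw [hzero, mul_zero] at this
  exact this.not_gt hpos

theorem top_k_sampling_breaks_dp (V k : ℕ) (hk : 1 ≤ k) (hkV : k + 1 ≤ V)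
    (b₁ b₂ T : ℝ) (hb : b₁ < b₂) (hT : 0 < T)
    (topk : (Fin V → ℝ) → Finset (Fin V))
    (hcard : ∀ u, (topk u).card = k)
    (htop : ∀ u, ∀ i ∈ topk u, ∀ j ∉ topk u, u j ≤ u i)
    (P : (Fin V → ℝ) → Fin V → ℝ)
    (hP : ∀ u v, P u v =
      if v ∈ topk u then Real.exp (u v / T) / ∑ j ∈ topk u, Real.exp (u j / T)
      else 0) :
    (∃ u u' : Fin V → ℝ,
      (∀ i, u i ∈ Set.Icc b₁ b₂) ∧ (∀ i, u' i ∈ Set.Icc b₁ b₂) ∧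
      ∃ v : Fin V, 0 < P u v ∧ P u' v = 0) ∧
    ∀ ε : ℝ, ¬ (∀ u u' : Fin V → ℝ,
      (∀ i, u i ∈ Set.Icc b₁ b₂) → (∀ i, u' i ∈ Set.Icc b₁ b₂) →
      ∀ v : Fin V, P u v ≤ Real.exp ε * P u' v) :=
  top_k_sampling_breaks_dp_general V k hk hkV b₁ b₂ T hb topk hcard htop P hP
end

section
/- The softmax probability ratio bound is tight: for every b₁ < b₂, T > 0, and V ≥ 2, there exist logit vectors u, u' ∈ [b₁, b₂]^V and an index k such that softmax_T(u)_k / softmax_T(u')_k → exp(2(b₂−b₁)/T) as V → ∞ (and for any fixed V the ratio can be made at least exp(2(b₂−b₁)/T)·(V−1+exp(−(b₂−b₁)/T))/(V−1+exp((b₂−b₁)/T))). -/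
open Filter Real

theorem softmax_ratio_bound_tight (b₁ b₂ T : ℝ) (hb : b₁ < b₂) (hT : 0 < T) :
    Filter.Tendsto
      (fun V : ℕ =>
        (Real.exp (b₂ / T) / (Real.exp (b₂ / T) + ((V : ℝ) - 1) * Real.exp (b₁ / T))) /
          (Real.exp (b₁ / T) / (Real.exp (b₁ / T) + ((V : ℝ) - 1) * Real.exp (b₂ / T))))
      Filter.atTop (nhds (Real.exp (2 * (b₂ - b₁) / T))) ∧
    ∀ V : ℕ, 2 ≤ V →
      ∃ (u u' : Fin V → ℝ) (k : Fin V),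
        (∀ i, u i ∈ Set.Icc b₁ b₂) ∧ (∀ i, u' i ∈ Set.Icc b₁ b₂) ∧
        Real.exp (2 * (b₂ - b₁) / T) *
            (((V : ℝ) - 1 + Real.exp (-(b₂ - b₁) / T)) /
              ((V : ℝ) - 1 + Real.exp ((b₂ - b₁) / T))) ≤
          (Real.exp (u k / T) / ∑ j, Real.exp (u j / T)) /
            (Real.exp (u' k / T) / ∑ j, Real.exp (u' j / T)) := by
  set A := Real.exp (b₂ / T) with hA
  set B := Real.exp (b₁ / T) with hB
  have hApos : 0 < A := Real.exp_pos _
  have hBpos : 0 < B := Real.exp_pos _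
  have hlim : Real.exp (2 * (b₂ - b₁) / T) = A * A / (B * B) := by
    rw [hA, hB, ← Real.exp_add, ← Real.exp_add, ← Real.exp_sub]
    ring_nf
  constructor
  · -- limit part
    have key : Tendsto (fun x : ℝ =>
        (A / (A + (x - 1) * B)) / (B / (B + (x - 1) * A))) atTop
        (nhds (A * A / (B * B))) := by
      have hn : Tendsto (fun x : ℝ => A * B / x + A * A * (1 - 1 / x)) atTop
          (nhds (A * A)) := by
        have h1 : Tendsto (fun x : ℝ => A * B / x) atTop (nhds 0) := by
          simpa [div_eq_mul_inv] using tendsto_inv_atTop_zero.const_mul (A * B)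
        have h2 : Tendsto (fun x : ℝ => A * A * (1 - 1 / x)) atTop (nhds (A * A)) := by
          have : Tendsto (fun x : ℝ => 1 - 1 / x) atTop (nhds (1 - 0)) := by
            simpa [one_div] using (tendsto_const_nhds (x := (1:ℝ))).sub tendsto_inv_atTop_zero
          rw [sub_zero] at this
          simpa using this.const_mul (A * A)
        simpa using h1.add h2
      have hd : Tendsto (fun x : ℝ => B * A / x + B * B * (1 - 1 / x)) atTop
          (nhds (B * B)) := by
        have h1 : Tendsto (fun x : ℝ => B * A / x) atTop (nhds 0) := by
          simpa [div_eq_mul_inv] using tendsto_inv_atTop_zero.const_mul (B * A)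
        have h2 : Tendsto (fun x : ℝ => B * B * (1 - 1 / x)) atTop (nhds (B * B)) := by
          have : Tendsto (fun x : ℝ => 1 - 1 / x) atTop (nhds (1 - 0)) := by
            simpa [one_div] using (tendsto_const_nhds (x := (1:ℝ))).sub tendsto_inv_atTop_zero
          rw [sub_zero] at this
          simpa using this.const_mul (B * B)
        simpa using h1.add h2
      have hdiv := hn.div hd (by positivity)
      refine Tendsto.congr' ?_ hdiv
      filter_upwards [eventually_ge_atTop (2 : ℝ)] with x hx
      have hx0 : x ≠ 0 := by linarith
      have hx1 : (0:ℝ) < x - 1 := by linarith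
      have hden1 : A + (x - 1) * B ≠ 0 := by positivity
      have hden2 : B + (x - 1) * A ≠ 0 := by positivity
      simp only [Pi.div_apply]
      field_simp
    rw [hlim]
    exact key.comp tendsto_natCast_atTop_atTop
  · -- tightness
    intro V hV
    have hVpos : 0 < V := by omega
    have k : Fin V := ⟨0, hVpos⟩
    refine ⟨fun i => if i = k then b₂ else b₁, fun i => if i = k then b₁ else b₂, k,
      ?_, ?_, ?_⟩
    · intro i; by_cases h : i = k <;> simp [h, le_of_lt hb]
    · intro i; by_cases h : i = k <;> simp [h, le_of_lt hb]
    · have hsum : ∀ a b : ℝ, ∑ j : Fin V, (if j = k then a else b) = a + ((V : ℝ) - 1) * b := by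
        intro a b
        have h1 : ∑ j : Fin V, (if j = k then a else b)
            = ∑ j : Fin V, (b + if j = k then a - b else 0) := by
          refine Finset.sum_congr rfl fun j _ => ?_
          by_cases h : j = k <;> simp [h]
        rw [h1, Finset.sum_add_distrib, Finset.sum_const, Finset.sum_ite_eq' Finset.univ k]
        simp [Finset.card_univ]
        ring
      have hek : ∀ a b : ℝ, Real.exp ((if (k:Fin V) = k then a else b) / T) = Real.exp (a / T) := by
        intro a b; simp
      have hsum1 : ∑ j : Fin V, Real.exp ((if j = k then b₂ else b₁) / T)
          = A + ((V : ℝ) - 1) * B := by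
        rw [← hsum A B]
        refine Finset.sum_congr rfl fun j _ => ?_
        by_cases h : j = k <;> simp [h, hA, hB]
      have hsum2 : ∑ j : Fin V, Real.exp ((if j = k then b₁ else b₂) / T)
          = B + ((V : ℝ) - 1) * A := by
        rw [← hsum B A]
        refine Finset.sum_congr rfl fun j _ => ?_
        by_cases h : j = k <;> simp [h, hA, hB]
      rw [hsum1, hsum2, hek b₂ b₁, hek b₁ b₂]
      have hE1 : Real.exp ((b₂ - b₁) / T) = A / B := by
        rw [hA, hB, ← Real.exp_sub]; ring_nf
      have hE2 : Real.exp (-(b₂ - b₁) / T) = B / A := by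
        rw [hA, hB, ← Real.exp_sub]; ring_nf
      rw [hlim, hE1, hE2]
      apply le_of_eq
      have hc : (0:ℝ) < (V:ℝ) - 1 := by
        have : (2:ℝ) ≤ (V:ℝ) := by exact_mod_cast hV
        linarith
      have h1 : A + ((V:ℝ) - 1) * B ≠ 0 := by positivity
      have h2 : B + ((V:ℝ) - 1) * A ≠ 0 := by positivity
      have h3 : (V:ℝ) - 1 + A / B ≠ 0 := by positivity
      field_simp
      ring
end
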